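/- The Gaussian R-matrix G_d = d^{-1/2} Σ_{k=0}^{d-1} ξ^{k²} U^k satisfies the Yang-Baxter equation (G_d ⊗ 1)(1 ⊗ G_d)(G_d ⊗ 1) = (1 ⊗ G_d)(G_d ⊗ 1)(1 ⊗ G_d) on (ℂ^d)^{⊗3}. -/

import Mathlib

/-!
With `V = U ⊗ 1` and `W = 1 ⊗ U` on `(ℂ^d)^{⊗3}` one has `V^d = W^d = 1` and
`V W = ξ² W V`, so `x ↦ V^x` and `x ↦ W^x` are representations of `ℤ/d`, and their commutation
is governed by the character `χ(x) = ξ^{2x}` of `ℤ/d`. Since `ξ^{2d} = ξ^{d²} = 1`, the weight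
`γ(x) = ξ^{x²}` is also well defined on `ℤ/d`, and `γ(x + y) = γ(x) γ(y) χ(xy)`. Expanding both
sides of the Yang-Baxter equation and moving every monomial to the normal form `W^a V^b`, the
substitution `(a, b, c) = (i + j, i + k, -i)` of `(ℤ/d)³` matches the two triple sums term by
term.
-/

open Matrix Kronecker Complex

/-- The algebra `M_d ⊗ M_d` realized as matrices indexed by pairs. -/
abbrev MM (d : ℕ) := Matrix (Fin d × Fin d) (Fin d × Fin d) ℂ

/-- `R ⊗ 1` acting on the triple tensor product `ℂ^d ⊗ ℂ^d ⊗ ℂ^d`. -/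
def amp1 {d : ℕ} (R : MM d) :
    Matrix (Fin d × Fin d × Fin d) (Fin d × Fin d × Fin d) ℂ :=
  Matrix.of fun x y => R (x.1, x.2.1) (y.1, y.2.1) * (if x.2.2 = y.2.2 then 1 else 0)

/-- `1 ⊗ R` acting on the triple tensor product `ℂ^d ⊗ ℂ^d ⊗ ℂ^d`. -/
def amp2 {d : ℕ} (R : MM d) :
    Matrix (Fin d × Fin d × Fin d) (Fin d × Fin d × Fin d) ℂ :=
  Matrix.of fun x y => (if x.1 = y.1 then 1 else 0) * R (x.2.1, x.2.2) (y.2.1, y.2.2)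

/-- The Yang-Baxter equation `(R⊗1)(1⊗R)(R⊗1) = (1⊗R)(R⊗1)(1⊗R)`. -/
def YBE {d : ℕ} (R : MM d) : Prop :=
  amp1 R * amp2 R * amp1 R = amp2 R * amp1 R * amp2 R

/-- The root of unity `ξ`: `e^{2πi/d}` for `d` odd, `e^{πi/d}` for `d` even. -/
noncomputable def xi (d : ℕ) : ℂ :=
  if Odd d then Complex.exp (2 * Real.pi * Complex.I / d)
  else Complex.exp (Real.pi * Complex.I / d)

/-- The unitary `U` on `ℂ^d ⊗ ℂ^d` with `U(e_k ⊗ e_l) = ξ^{l-k} e_{k+1} ⊗ e_{l+1}`,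
indices mod `d`. -/
noncomputable def Ug (d : ℕ) [NeZero d] : MM d :=
  Matrix.of fun p q =>
    if p.1 = q.1 + 1 ∧ p.2 = q.2 + 1 then xi d ^ ((q.2 : ℤ) - (q.1 : ℤ)) else 0

/-- The Gaussian R-matrix `G_d = d^{-1/2} Σ_k ξ^{k²} U^k`. -/
noncomputable def Gg (d : ℕ) [NeZero d] : MM d :=
  ((Real.sqrt d : ℂ))⁻¹ • ∑ k ∈ Finset.range d, xi d ^ (k ^ 2) • Ug d ^ k

section Braid

variable {R K A : Type*} [CommRing R] [CommRing K] [Ring A] [Algebra K A]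
  (χ : AddChar R K) {γ : R → K}

theorem braid_coeff_eq (hγ : ∀ x y, γ (x + y) = γ x * γ y * χ (x * y)) (hγ0 : γ 0 = 1)
    (i j k : R) :
    γ (i + j) * γ (i + k) * γ (-i) * χ ((i + k) * -i) = γ i * γ j * γ k * χ (i * j) := by
  have hcancel : γ i * γ (-i) * χ (i * -i) = 1 := by rw [← hγ, add_neg_cancel, hγ0]
  have hχ : χ (i * k) * χ ((i + k) * -i) = χ (i * -i) := by
    rw [← AddChar.map_add_eq_mul]; ring_nf
  rw [hγ, hγ]
  linear_combination (γ i * γ j * χ (i * j) * γ i * γ k * γ (-i)) * hχ +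
    (γ i * γ j * γ k * χ (i * j)) * hcancel

theorem gaussian_sum_braid [Fintype R] (hγ : ∀ x y, γ (x + y) = γ x * γ y * χ (x * y))
    (hγ0 : γ 0 = 1) {V W : R → A} (hV : ∀ x y, V (x + y) = V x * V y)
    (hW : ∀ x y, W (x + y) = W x * W y) (hVW : ∀ x y, V x * W y = χ (x * y) • (W y * V x)) :
    (∑ x, γ x • V x) * (∑ y, γ y • W y) * (∑ z, γ z • V z) =
      (∑ x, γ x • W x) * (∑ y, γ y • V y) * (∑ z, γ z • W z) := by
  have expand (P Q : R → A) : (∑ x, γ x • P x) * (∑ y, γ y • Q y) * (∑ z, γ z • P z) =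
      ∑ p : R × R × R, (γ p.1 * γ p.2.1 * γ p.2.2) • (P p.1 * Q p.2.1 * P p.2.2) := by
    rw [Finset.sum_mul_sum, Finset.sum_mul]
    simp only [Finset.sum_mul_sum, Fintype.sum_prod_type, smul_mul_smul_comm]
  have normal_form_left (i j k : R) : V i * W j * V k = χ (i * j) • (W j * V (i + k)) := by
    rw [hVW, smul_mul_assoc, mul_assoc, ← hV]
  have normal_form_right (a b c : R) : W a * V b * W c = χ (b * c) • (W (a + c) * V b) := by
    rw [mul_assoc, hVW, mul_smul_comm, ← mul_assoc, ← hW]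
  simp only [expand, normal_form_left, normal_form_right, smul_smul]
  let e : R × R × R ≃ R × R × R :=
    { toFun p := (p.1 + p.2.1, p.1 + p.2.2, -p.1)
      invFun q := (-q.2.2, q.1 + q.2.2, q.2.1 + q.2.2)
      left_inv p := by ext <;> simp
      right_inv q := by ext <;> simp }
  refine Fintype.sum_equiv e _ _ fun ⟨i, j, k⟩ => ?_
  simp only [e, Equiv.coe_fn_mk, braid_coeff_eq χ hγ hγ0, add_neg_cancel_comm]

end Braid

theorem pow_mul_pow_eq_smul_of_mul_eq_smul {K A : Type*} [CommSemiring K] [Semiring A]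
    [Algebra K A] {a b : A} {c : K} (h : a * b = c • (b * a)) (m n : ℕ) :
    a ^ m * b ^ n = c ^ (m * n) • (b ^ n * a ^ m) := by
  have mul_pow_right (n : ℕ) : a * b ^ n = c ^ n • (b ^ n * a) := by
    induction n with
    | zero => simp
    | succ n ih =>
      rw [pow_succ, ← mul_assoc, ih, smul_mul_assoc, mul_assoc, h, mul_smul_comm, smul_smul,
        ← mul_assoc, ← pow_succ, pow_succ c]
  induction m with
  | zero => simp
  | succ m ih =>
    rw [pow_succ, mul_assoc, mul_pow_right, mul_smul_comm, ← mul_assoc, ih, smul_mul_assoc,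
      smul_smul, mul_assoc, ← pow_succ, ← pow_add, add_one_mul, add_comm n]

section ZModPow

variable {d : ℕ} {K : Type*} [CommMonoid K] {ζ : K}

theorem pow_sq_mod (hζ : (ζ ^ 2) ^ d = 1) (hζ' : ζ ^ (d ^ 2) = 1) (n : ℕ) :
    ζ ^ ((n % d) ^ 2) = ζ ^ (n ^ 2) := by
  conv_rhs => rw [← Nat.mod_add_div n d]
  rw [show (n % d + d * (n / d)) ^ 2 =
      (n % d) ^ 2 + 2 * d * (n % d * (n / d)) + d ^ 2 * (n / d) ^ 2 by ring,
    pow_add, pow_add, pow_mul ζ (2 * d), pow_mul ζ 2, pow_mul ζ (d ^ 2), hζ, hζ', one_pow,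
    one_pow, mul_one, mul_one]

variable [NeZero d]

theorem pow_val_sq_add (hζ : (ζ ^ 2) ^ d = 1) (hζ' : ζ ^ (d ^ 2) = 1) (x y : ZMod d) :
    ζ ^ (x + y).val ^ 2 = ζ ^ x.val ^ 2 * ζ ^ y.val ^ 2 * AddChar.zmodChar d hζ (x * y) := by
  rw [ZMod.val_add, pow_sq_mod hζ hζ', AddChar.zmodChar_apply, ZMod.val_mul,
    ← pow_eq_pow_mod _ hζ, ← pow_mul, ← pow_add, ← pow_add]
  ring_nf

theorem pow_val_add_of_pow_eq_one {M : Type*} [Monoid M] {a : M} (ha : a ^ d = 1)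
    (x y : ZMod d) : a ^ (x + y).val = a ^ x.val * a ^ y.val := by
  rw [ZMod.val_add, ← pow_eq_pow_mod _ ha, pow_add]

theorem pow_fin_val_add_one {M : Type*} [Monoid M] {a : M} (ha : a ^ d = 1) (j : Fin d) :
    a ^ (j + 1).val = a ^ j.val * a := by
  rw [Fin.val_add, Fin.val_one', ← pow_eq_pow_mod _ ha, pow_add, ← pow_eq_pow_mod _ ha, pow_one]

theorem Finset.sum_range_eq_sum_zmod_val {M : Type*} [AddCommMonoid M] (f : ℕ → M) :
    ∑ k ∈ Finset.range d, f k = ∑ x : ZMod d, f x.val :=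
  Finset.sum_nbij' (↑) ZMod.val (fun _ _ => Finset.mem_univ _)
    (fun x _ => Finset.mem_range.2 x.val_lt)
    (fun _ hk => ZMod.val_cast_of_lt (Finset.mem_range.1 hk))
    (fun x _ => ZMod.natCast_zmod_val x)
    (fun _ hk => by rw [ZMod.val_cast_of_lt (Finset.mem_range.1 hk)])

end ZModPow

theorem isPrimitiveRoot_xi (d : ℕ) [NeZero d] :
    IsPrimitiveRoot (xi d) (if Odd d then d else 2 * d) := by
  unfold xi
  split_ifs
  · exact isPrimitiveRoot_exp d (NeZero.ne d)
  · convert isPrimitiveRoot_exp (2 * d) (by simp [NeZero.ne d]) using 2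
    push_cast
    field_simp

theorem xi_ne_zero (d : ℕ) : xi d ≠ 0 := by
  unfold xi; split_ifs <;> exact Complex.exp_ne_zero _

theorem xi_sq_pow_self (d : ℕ) [NeZero d] : (xi d ^ 2) ^ d = 1 := by
  rw [← pow_mul, (isPrimitiveRoot_xi d).pow_eq_one_iff_dvd]
  split_ifs
  · exact dvd_mul_left d 2
  · exact dvd_rfl

theorem xi_pow_sq_self (d : ℕ) [NeZero d] : xi d ^ (d ^ 2) = 1 := by
  rw [(isPrimitiveRoot_xi d).pow_eq_one_iff_dvd, sq]
  split_ifs with hd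
  · exact dvd_mul_left d d
  · exact mul_dvd_mul_right (even_iff_two_dvd.1 (Nat.not_odd_iff_even.1 hd)) d

namespace Matrix

theorem kronecker_pow {m n R : Type*} [Fintype m] [Fintype n] [DecidableEq m] [DecidableEq n]
    [CommSemiring R] (A : Matrix m m R) (B : Matrix n n R) (k : ℕ) :
    (A ⊗ₖ B) ^ k = (A ^ k) ⊗ₖ (B ^ k) := by
  induction k with
  | zero => simp
  | succ k ih => rw [pow_succ, pow_succ, pow_succ, ih, mul_kronecker_mul]

variable {d : ℕ} [NeZero d] {K : Type*}

def weightedShift [Zero K] (f : Fin d → K) : Matrix (Fin d) (Fin d) K :=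
  of fun i j => if i = j + 1 then f j else 0

variable [CommRing K]

theorem weightedShift_mul_weightedShift (f g : Fin d → K) :
    weightedShift f * weightedShift g =
      of fun i j => if i = j + 1 + 1 then f (j + 1) * g j else 0 := by
  ext i j
  simp [weightedShift, mul_apply]

open Fin.NatCast in
theorem weightedShift_pow (f : Fin d → K) (k : ℕ) :
    weightedShift f ^ k =
      of fun i j : Fin d => if i = j + k then ∏ t ∈ Finset.range k, f (j + t) else 0 := by
  induction k with
  | zero => ext i j; simp [one_apply]
  | succ k ih =>
    ext i j
    rw [pow_succ', ih]
    simp [weightedShift, mul_apply, Finset.prod_range_succ, add_assoc, mul_comm]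

open Fin.NatCast in
theorem weightedShift_pow_card (f : Fin d → K) : weightedShift f ^ d = (∏ j, f j) • 1 := by
  have prod_orbit (j : Fin d) : ∏ t ∈ Finset.range d, f (j + (t : Fin d)) = ∏ i, f i := by
    rw [← Fin.prod_univ_eq_prod_range (fun t => f (j + t)) d]
    simpa using Equiv.prod_comp (Equiv.addLeft j) f
  ext i j
  simp [weightedShift_pow, prod_orbit, one_apply]

theorem weightedShift_pow_val_mul_weightedShift_inv_pow_val {K : Type*} [Field K] {ζ : K}
    (hζ : (ζ ^ 2) ^ d = 1) (hζ0 : ζ ≠ 0) :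
    weightedShift (fun j : Fin d => ζ ^ j.val) * weightedShift (fun j : Fin d => ζ⁻¹ ^ j.val) =
      ζ ^ 2 • (weightedShift (fun j : Fin d => ζ⁻¹ ^ j.val) *
        weightedShift (fun j : Fin d => ζ ^ j.val)) := by
  rw [weightedShift_mul_weightedShift, weightedShift_mul_weightedShift]
  ext i j
  have step := pow_fin_val_add_one hζ j
  rw [pow_right_comm ζ 2, pow_right_comm ζ 2] at step
  simp only [of_apply, Matrix.smul_apply, smul_eq_mul, mul_ite, mul_zero, inv_pow]
  split_ifs
  · field_simp
    linear_combination step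
  · rfl

end Matrix

open Matrix

theorem Ug_eq_kronecker (d : ℕ) [NeZero d] :
    Ug d =
      weightedShift (fun j => (xi d)⁻¹ ^ j.val) ⊗ₖ weightedShift (fun j => xi d ^ j.val) := by
  ext p q
  simp only [Ug, weightedShift, of_apply, kroneckerMap_apply, zpow_sub₀ (xi_ne_zero d),
    zpow_natCast, inv_pow]
  split_ifs <;> simp_all [div_eq_inv_mul]

theorem Ug_pow_self (d : ℕ) [NeZero d] : Ug d ^ d = 1 := by
  rw [Ug_eq_kronecker, kronecker_pow, weightedShift_pow_card, weightedShift_pow_card,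
    smul_kronecker, kronecker_smul, one_kronecker_one, smul_smul, ← Finset.prod_mul_distrib]
  simp [inv_pow, xi_ne_zero]

theorem amp1_kronecker {d : ℕ} (A B : Matrix (Fin d) (Fin d) ℂ) :
    amp1 (A ⊗ₖ B) = A ⊗ₖ (B ⊗ₖ 1) := by
  ext x y
  simp [amp1, one_apply]

theorem amp2_eq_one_kronecker {d : ℕ} (R : MM d) : amp2 R = 1 ⊗ₖ R := by
  ext x y
  simp [amp2, one_apply]

theorem amp1_kronecker_mul_amp2_kronecker {d : ℕ} (A B : Matrix (Fin d) (Fin d) ℂ) :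
    amp1 (A ⊗ₖ B) * amp2 (A ⊗ₖ B) = A ⊗ₖ ((B * A) ⊗ₖ B) := by
  rw [amp1_kronecker, amp2_eq_one_kronecker, ← mul_kronecker_mul, ← mul_kronecker_mul, mul_one,
    one_mul]

theorem amp2_kronecker_mul_amp1_kronecker {d : ℕ} (A B : Matrix (Fin d) (Fin d) ℂ) :
    amp2 (A ⊗ₖ B) * amp1 (A ⊗ₖ B) = A ⊗ₖ ((A * B) ⊗ₖ B) := by
  rw [amp1_kronecker, amp2_eq_one_kronecker, ← mul_kronecker_mul, ← mul_kronecker_mul, mul_one,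
    one_mul]

theorem amp1_Ug_mul_amp2_Ug (d : ℕ) [NeZero d] :
    amp1 (Ug d) * amp2 (Ug d) = xi d ^ 2 • (amp2 (Ug d) * amp1 (Ug d)) := by
  rw [Ug_eq_kronecker, amp1_kronecker_mul_amp2_kronecker, amp2_kronecker_mul_amp1_kronecker,
    weightedShift_pow_val_mul_weightedShift_inv_pow_val (xi_sq_pow_self d) (xi_ne_zero d),
    smul_kronecker, kronecker_smul]

def amp1AlgHom (d : ℕ) :
    MM d →ₐ[ℂ] Matrix (Fin d × Fin d × Fin d) (Fin d × Fin d × Fin d) ℂ :=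
  (reindexAlgEquiv ℂ ℂ (Equiv.prodAssoc (Fin d) (Fin d) (Fin d))).toAlgHom.comp
    ((kroneckerAlgEquiv (Fin d × Fin d) (Fin d) ℂ).toAlgHom.comp
      Algebra.TensorProduct.includeLeft)

def amp2AlgHom (d : ℕ) :
    MM d →ₐ[ℂ] Matrix (Fin d × Fin d × Fin d) (Fin d × Fin d × Fin d) ℂ :=
  (kroneckerAlgEquiv (Fin d) (Fin d × Fin d) ℂ).toAlgHom.comp Algebra.TensorProduct.includeRight

theorem amp1AlgHom_apply {d : ℕ} (R : MM d) : amp1AlgHom d R = amp1 R := by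
  ext x y
  simp [amp1AlgHom, amp1, one_apply]

theorem amp2AlgHom_apply {d : ℕ} (R : MM d) : amp2AlgHom d R = amp2 R := by
  rw [amp2_eq_one_kronecker]
  simp [amp2AlgHom]

theorem map_Gg {B : Type*} [Ring B] [Algebra ℂ B] (d : ℕ) [NeZero d] (φ : MM d →ₐ[ℂ] B) :
    φ (Gg d) =
      (Real.sqrt d : ℂ)⁻¹ • ∑ x : ZMod d, xi d ^ x.val ^ 2 • φ (Ug d) ^ x.val := by
  rw [Gg, map_smul, map_sum, Finset.sum_range_eq_sum_zmod_val]
  simp only [map_smul, map_pow]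

theorem gaussian_YBE_general (d : ℕ) [NeZero d] : YBE (Gg d) := by
  let χ := AddChar.zmodChar d (xi_sq_pow_self d)
  have amp1_pow_self : amp1 (Ug d) ^ d = 1 := by
    rw [← amp1AlgHom_apply, ← map_pow, Ug_pow_self, map_one]
  have amp2_pow_self : amp2 (Ug d) ^ d = 1 := by
    rw [← amp2AlgHom_apply, ← map_pow, Ug_pow_self, map_one]
  have comm (x y : ZMod d) : amp1 (Ug d) ^ x.val * amp2 (Ug d) ^ y.val =
      χ (x * y) • (amp2 (Ug d) ^ y.val * amp1 (Ug d) ^ x.val) := by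
    rw [pow_mul_pow_eq_smul_of_mul_eq_smul (amp1_Ug_mul_amp2_Ug d), AddChar.zmodChar_apply,
      ZMod.val_mul, ← pow_eq_pow_mod _ (xi_sq_pow_self d)]
  rw [YBE, ← amp1AlgHom_apply, ← amp2AlgHom_apply, map_Gg, map_Gg]
  simp only [smul_mul_smul_comm, amp1AlgHom_apply, amp2AlgHom_apply]
  congr 1
  exact gaussian_sum_braid χ (pow_val_sq_add (xi_sq_pow_self d) (xi_pow_sq_self d)) (by simp)
    (pow_val_add_of_pow_eq_one amp1_pow_self) (pow_val_add_of_pow_eq_one amp2_pow_self) comm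

/-- The Gaussian R-matrix `G_d` satisfies the Yang-Baxter equation. -/
theorem gaussian_YBE (d : ℕ) [NeZero d] (hd : 2 ≤ d) : YBE (Gg d) :=
  gaussian_YBE_general d
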